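/- Assume σA² > 0, σcov² > 0, σrec² > 0 and σcov² > 4σrec². Then the function s has a strict local minimum at ρ = Υ (in particular, the second derivative of s at Υ is strictly positive). -/

import Mathlib

/-!
On `(0, 1)` the function `s` is a quotient `sNum / sDen` of two quadratics. Put
`D = a(c - 4r)(c - 2r)`, `B = c(c - 2r)(a + 2r)`, `E = c²(a + 2r)`; then `B² - D E = 2Ψ`,
so `Υ = (B - √(2Ψ)) / D` is a root of `D ρ² - 2 B ρ + E`. For any such root `u`,
`sNum x · sDen u - sNum u · sDen x = c (B - D u) (x - u)²`, and `B - D Υ = √(2Ψ)`. Hence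
`s x = s Υ + (x - Υ)² φ x` with `φ x = c √(2Ψ) / (sDen Υ · sDen x) > 0` on `(0, 1)`, which gives
the strict minimum at once and `s'' Υ = 2 φ Υ > 0`.
-/

/-- Ψ as in Proposition 2: `a`, `c`, `r` stand for σA², σcov², σrec². -/
noncomputable def Psi (a c r : ℝ) : ℝ :=
  c ^ 2 * (a + c - 2 * r) * (c - 2 * r) * r * (a + 2 * r)

/-- Υ, the candidate optimal power-splitting ratio. -/
noncomputable def Upsilon (a c r : ℝ) : ℝ :=
  (c * (c - 2 * r) * (a + 2 * r) - Real.sqrt (2 * Psi a c r)) /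
    (a * (c - 4 * r) * (c - 2 * r))

/-- The ρ-dependent factor `s(ρ)` of the high-SNR mutual information. -/
noncomputable def s (a c r : ℝ) (ρ : ℝ) : ℝ :=
  (c / ρ + a) *
    (a + ((c / ρ) * (2 * r / (1 - ρ))) / ((c / ρ) + (2 * r / (1 - ρ))))

open Filter Topology Set

lemma deriv_deriv_of_eventuallyEq_add_sq_mul {f φ : ℝ → ℝ} {u C : ℝ}
    (hφ : ContDiffAt ℝ 2 φ u) (hf : f =ᶠ[𝓝 u] fun x => C + (x - u) ^ 2 * φ x) :
    deriv (deriv f) u = 2 * φ u := by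
  have hφ' : DifferentiableAt ℝ (deriv φ) u :=
    (hφ.derivWithin (m := 1) (by norm_num)).differentiableAt (by norm_num)
  have hderiv : deriv f =ᶠ[𝓝 u] fun x => 2 * (x - u) * φ x + (x - u) ^ 2 * deriv φ x := by
    filter_upwards [hf.deriv, hφ.eventually (by simp)] with x hfx hφx
    rw [hfx]
    have hsq : HasDerivAt (fun y => (y - u) ^ 2) (2 * (x - u)) x := by
      simpa using ((hasDerivAt_id x).sub_const u).fun_pow 2
    exact ((hsq.fun_mul (hφx.differentiableAt (by norm_num)).hasDerivAt).const_add C).deriv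
  rw [hderiv.deriv_eq]
  have hsq : HasDerivAt (fun y => (y - u) ^ 2) 0 u := by
    simpa using ((hasDerivAt_id u).sub_const u).fun_pow 2
  have hlin : HasDerivAt (fun y => 2 * (y - u)) 2 u := by
    simpa using ((hasDerivAt_id u).sub_const u).const_mul 2
  have hφu := (hφ.differentiableAt (by norm_num)).hasDerivAt
  simpa using ((hlin.fun_mul hφu).fun_add (hsq.fun_mul hφ'.hasDerivAt)).deriv

def sNum (a c r x : ℝ) : ℝ := (c + a * x) * (c * (a + 2 * r) - a * (c - 2 * r) * x)

def sDen (c r x : ℝ) : ℝ := x * (c - (c - 2 * r) * x)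

lemma two_mul_Psi (a c r : ℝ) :
    2 * Psi a c r = (c * (c - 2 * r) * (a + 2 * r)) ^ 2
      - a * (c - 4 * r) * (c - 2 * r) * (c ^ 2 * (a + 2 * r)) := by
  unfold Psi; ring

section

variable {a c r u x : ℝ}

lemma sDen_pos (hc : 0 < c) (hr : 0 < r) (hx₀ : 0 < x) (hx₁ : x < 1) :
    0 < sDen c r x := by
  unfold sDen
  nlinarith [mul_pos hc (sub_pos.2 hx₁), mul_pos hr hx₀]

lemma s_eq_sNum_div_sDen (hc : 0 < c) (hr : 0 < r) (hx₀ : 0 < x) (hx₁ : x < 1) :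
    s a c r x = sNum a c r x / sDen c r x := by
  have hden := sDen_pos hc hr hx₀ hx₁
  have h1x : 0 < 1 - x := by linarith
  have hsum : 0 < c / x + 2 * r / (1 - x) := by positivity
  have hQ : c - (c - 2 * r) * x ≠ 0 := (pos_of_mul_pos_right hden hx₀.le).ne'
  have hpar : c / x * (2 * r / (1 - x)) / (c / x + 2 * r / (1 - x))
      = 2 * r * c / (c - (c - 2 * r) * x) := by
    rw [div_eq_div_iff hsum.ne' hQ]
    field_simp
    ring
  rw [s, hpar, eq_div_iff hden.ne', sNum, sDen]
  generalize hq : c - (c - 2 * r) * x = q at hQ ⊢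
  field_simp
  linear_combination (-(c + a * x) * a) * hq

lemma sNum_mul_sDen_sub_sNum_mul_sDen
    (hu : a * (c - 4 * r) * (c - 2 * r) * u ^ 2 - 2 * (c * (c - 2 * r) * (a + 2 * r)) * u
      + c ^ 2 * (a + 2 * r) = 0) (x : ℝ) :
    sNum a c r x * sDen c r u - sNum a c r u * sDen c r x =
      c * (c * (c - 2 * r) * (a + 2 * r) - a * (c - 4 * r) * (c - 2 * r) * u) * (x - u) ^ 2 := by
  unfold sNum sDen
  linear_combination c * (u - x) * hu

lemma Psi_pos (ha : 0 < a) (hc : 0 < c) (hr : 0 < r) (h4 : 4 * r < c) : 0 < Psi a c r := by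
  have : 0 < c - 2 * r := by linarith
  have : 0 < a + c - 2 * r := by linarith
  unfold Psi; positivity

lemma Upsilon_denom_pos (ha : 0 < a) (hr : 0 < r) (h4 : 4 * r < c) :
    0 < a * (c - 4 * r) * (c - 2 * r) := by
  have : 0 < c - 4 * r := by linarith
  have : 0 < c - 2 * r := by linarith
  positivity

lemma Upsilon_pos (ha : 0 < a) (hc : 0 < c) (hr : 0 < r) (h4 : 4 * r < c) :
    0 < Upsilon a c r := by
  have hD := Upsilon_denom_pos ha hr h4
  have hB : 0 < c * (c - 2 * r) * (a + 2 * r) := by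
    have : 0 < c - 2 * r := by linarith
    positivity
  refine div_pos (sub_pos.2 ((Real.sqrt_lt' hB).2 ?_)) hD
  rw [two_mul_Psi]
  have : 0 < c ^ 2 * (a + 2 * r) := by positivity
  nlinarith

lemma Upsilon_lt_one (ha : 0 < a) (hc : 0 < c) (hr : 0 < r) (h4 : 4 * r < c) :
    Upsilon a c r < 1 := by
  have hD := Upsilon_denom_pos ha hr h4
  rw [Upsilon, div_lt_one hD, sub_lt_comm]
  have hBD : c * (c - 2 * r) * (a + 2 * r) - a * (c - 4 * r) * (c - 2 * r)
      = 2 * r * (c - 2 * r) * (c + 2 * a) := by ring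
  have : 0 < c - 2 * r := by linarith
  rw [hBD, Real.lt_sqrt (by positivity), two_mul_Psi]
  have : 0 < a * (c - 4 * r) * (c - 2 * r) * (2 * r * (c + a) * (c - 4 * r)) := by
    have : 0 < c - 4 * r := by linarith
    positivity
  nlinarith

lemma Upsilon_isRoot (ha : 0 < a) (hc : 0 < c) (hr : 0 < r) (h4 : 4 * r < c) :
    a * (c - 4 * r) * (c - 2 * r) * Upsilon a c r ^ 2
      - 2 * (c * (c - 2 * r) * (a + 2 * r)) * Upsilon a c r + c ^ 2 * (a + 2 * r) = 0 := by
  have hD := (Upsilon_denom_pos ha hr h4).ne'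
  have ht := Real.sq_sqrt (mul_pos two_pos (Psi_pos ha hc hr h4)).le
  have hu : a * (c - 4 * r) * (c - 2 * r) * Upsilon a c r
      = c * (c - 2 * r) * (a + 2 * r) - √(2 * Psi a c r) := mul_div_cancel₀ _ hD
  refine mul_left_cancel₀ hD ?_
  linear_combination (a * (c - 4 * r) * (c - 2 * r) * Upsilon a c r
    - c * (c - 2 * r) * (a + 2 * r) - √(2 * Psi a c r)) * hu + ht + two_mul_Psi a c r

lemma s_eq_s_Upsilon_add_sq_mul (ha : 0 < a) (hc : 0 < c) (hr : 0 < r)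
    (h4 : 4 * r < c) (hx₀ : 0 < x) (hx₁ : x < 1) :
    s a c r x = s a c r (Upsilon a c r) + (x - Upsilon a c r) ^ 2 *
      (c * √(2 * Psi a c r) / (sDen c r (Upsilon a c r) * sDen c r x)) := by
  have hu₀ := Upsilon_pos ha hc hr h4
  have hu₁ := Upsilon_lt_one ha hc hr h4
  have hDx := (sDen_pos hc hr hx₀ hx₁).ne'
  have hDu := (sDen_pos hc hr hu₀ hu₁).ne'
  have hD := (Upsilon_denom_pos ha hr h4).ne'
  have hsqrt : √(2 * Psi a c r) = c * (c - 2 * r) * (a + 2 * r)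
      - a * (c - 4 * r) * (c - 2 * r) * Upsilon a c r := by
    rw [Upsilon, mul_div_cancel₀ _ hD]; ring
  rw [s_eq_sNum_div_sDen hc hr hx₀ hx₁, s_eq_sNum_div_sDen hc hr hu₀ hu₁, hsqrt]
  field_simp
  linear_combination sNum_mul_sDen_sub_sNum_mul_sDen (Upsilon_isRoot ha hc hr h4) x

end

/-- s has a strict local minimum at Υ; in particular the second
derivative of s at Υ is strictly positive. -/
theorem stmt_2 (a c r : ℝ) (ha : 0 < a) (hc : 0 < c) (hr : 0 < r)
    (h4 : 4 * r < c) :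
    (∃ ε > 0, ∀ ρ : ℝ, |ρ - Upsilon a c r| < ε → ρ ≠ Upsilon a c r →
      s a c r (Upsilon a c r) < s a c r ρ) ∧
    0 < deriv (deriv (s a c r)) (Upsilon a c r) := by
  set u := Upsilon a c r
  have hu₀ : 0 < u := Upsilon_pos ha hc hr h4
  have hu₁ : u < 1 := Upsilon_lt_one ha hc hr h4
  set φ : ℝ → ℝ := fun x => c * √(2 * Psi a c r) / (sDen c r u * sDen c r x)
  have hφ_pos : ∀ x ∈ Ioo (0 : ℝ) 1, 0 < φ x := fun x hx => by
    have := Psi_pos ha hc hr h4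
    have := sDen_pos hc hr hu₀ hu₁
    have := sDen_pos hc hr hx.1 hx.2
    positivity
  have hs : ∀ x ∈ Ioo (0 : ℝ) 1, s a c r x = s a c r u + (x - u) ^ 2 * φ x :=
    fun x hx => s_eq_s_Upsilon_add_sq_mul ha hc hr h4 hx.1 hx.2
  constructor
  · refine ⟨min u (1 - u), lt_min hu₀ (by linarith), fun ρ hρ hne => ?_⟩
    obtain ⟨hρl, hρr⟩ := abs_lt.1 hρ
    have hρ : ρ ∈ Ioo (0 : ℝ) 1 :=
      ⟨by linarith [min_le_left u (1 - u)], by linarith [min_le_right u (1 - u)]⟩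
    have : 0 < (ρ - u) ^ 2 := sq_pos_of_ne_zero (sub_ne_zero.2 hne)
    rw [hs ρ hρ]
    exact lt_add_of_pos_right _ (mul_pos this (hφ_pos ρ hρ))
  · have hDu := sDen_pos hc hr hu₀ hu₁
    have hφ : ContDiffAt ℝ 2 φ u :=
      contDiffAt_const.div (by unfold sDen; fun_prop) (by positivity)
    have hs_near : s a c r =ᶠ[𝓝 u] fun x => s a c r u + (x - u) ^ 2 * φ x :=
      eventually_of_mem (Ioo_mem_nhds hu₀ hu₁) hs
    rw [deriv_deriv_of_eventuallyEq_add_sq_mul hφ hs_near]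
    exact mul_pos two_pos (hφ_pos u ⟨hu₀, hu₁⟩)
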